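/- arXiv:1312.6163 — 3 statements merged into one kernel-verified Lean document; each statement's English description precedes it below -/
import Mathlib

section
/- Let w be a weight on ℝ^n that is doubling: there is a constant C_d < ∞ such that w(2Q) ≤ C_d·w(Q) for every cube Q. Then w is uniformly of full dimension; that is, there exists η ∈ (0,1), depending only on n and C_d, such that for every cube Q and every linear subspace H ⊆ ℝ^n of dimension n−1, ∫_Q ∫_Q dist(x', H + x)/|x − x'| w(dx) w(dx') ≥ η·w(Q)². -/
open MeasureTheory Metric Set
open scoped ENNReal NNReal

noncomputable section

/-- Euclidean space ℝ^n. -/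
abbrev Euc (n : ℕ) := EuclideanSpace ℝ (Fin n)

/-- An axis-parallel closed cube in ℝ^n, given by its center and (positive) side length. -/
structure Cube (n : ℕ) where
  center : Euc n
  side : ℝ
  side_pos : 0 < side

namespace Cube

variable {n : ℕ}

/-- The set of points of the cube. -/
def toSet (Q : Cube n) : Set (Euc n) :=
  {x | ∀ i, |x i - Q.center i| ≤ Q.side / 2}

/-- The concentric dilate `aQ`, as a set. -/
def scaled (Q : Cube n) (a : ℝ) : Set (Euc n) :=
  {x | ∀ i, |x i - Q.center i| ≤ a * Q.side / 2}

end Cube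

variable {n : ℕ}

/-- Truncated `d`-dimensional Riesz transform of `f σ`. -/
def rieszTrunc (d : ℝ) (σ : Measure (Euc n)) (f : Euc n → ℝ) (a b : ℝ) (x : Euc n) : Euc n :=
  ∫ y in {y : Euc n | a < dist x y ∧ dist x y < b},
    (f y * ‖x - y‖ ^ (-(d + 1))) • (x - y) ∂σ

/-- The two-weight norm inequality with constant `N`. -/
def NormIneq (d : ℝ) (σ w : Measure (Euc n)) (N : ℝ) : Prop :=
  ∀ f : Euc n → ℝ, MemLp f 2 σ → ∀ a b : ℝ, 0 < a → a < b →
    eLpNorm (rieszTrunc d σ f a b) 2 w ≤ ENNReal.ofReal N * eLpNorm f 2 σ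

/-- The testing conditions with constant `T`. -/
def Testing (d : ℝ) (σ w : Measure (Euc n)) (T : ℝ) : Prop :=
  ∀ Q : Cube n, ∀ a b : ℝ, 0 < a → a < b →
    (∫⁻ x in Q.toSet,
        ENNReal.ofReal (‖rieszTrunc d σ (Q.toSet.indicator fun _ => (1 : ℝ)) a b x‖ ^ 2) ∂w
      ≤ ENNReal.ofReal (T ^ 2) * σ Q.toSet) ∧
    (∫⁻ x in Q.toSet,
        ENNReal.ofReal (‖rieszTrunc d w (Q.toSet.indicator fun _ => (1 : ℝ)) a b x‖ ^ 2) ∂σ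
      ≤ ENNReal.ofReal (T ^ 2) * w Q.toSet)

/-- The reproducing Poisson integral `P^r(μ, Q)`. -/
def Pr (d : ℝ) (μ : Measure (Euc n)) (Q : Cube n) : ℝ≥0∞ :=
  ∫⁻ x, ENNReal.ofReal (Q.side ^ d / (Q.side ^ (2 * d) + infDist x Q.toSet ^ (2 * d))) ∂μ

/-- The `A2` condition with constant `A2`. -/
def A2cond (d : ℝ) (σ w : Measure (Euc n)) (A2 : ℝ) : Prop :=
  ∀ Q : Cube n,
    (w Q.toSet / ENNReal.ofReal (Q.side ^ d)) * Pr d σ Q ≤ ENNReal.ofReal A2 ∧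
    (σ Q.toSet / ENNReal.ofReal (Q.side ^ d)) * Pr d w Q ≤ ENNReal.ofReal A2

/-- `w` is uniformly of full dimension with constant `η`. -/
def UFD (w : Measure (Euc n)) (η : ℝ) : Prop :=
  ∀ Q : Cube n, ∀ H : Submodule ℝ (Euc n), Module.finrank ℝ H = n - 1 →
    ENNReal.ofReal η * (w Q.toSet) ^ 2 ≤
      ∫⁻ x in Q.toSet, ∫⁻ x' in Q.toSet,
        ENNReal.ofReal (infDist (x' - x) (H : Set (Euc n)) / dist x x') ∂w ∂w

/-- `σ` and `w` share no common point mass. -/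
def NoCommonAtom (σ w : Measure (Euc n)) : Prop :=
  ∀ x : Euc n, σ {x} = 0 ∨ w {x} = 0


/-! Let `ν` be a unit normal of `H`; then `infDist v H ≥ |⟪v, ν⟫|`. Take the two subcubes of `Q`
of side `ℓ(Q)/4` sitting in the opposite corners selected by the sign vector of `ν`. For `x` in the
first and `x'` in the second, `⟪x' - x, ν⟫ ≥ (ℓ(Q)/2) ∑ᵢ |νᵢ| ≥ ℓ(Q)/2` while `|x - x'| ≤ n ℓ(Q)`,
so the integrand is at least `1/(2n)` on their product. Each of them has measure at least
`w(Q)/C³` by doubling, since `Q` lies in eight times either of them. -/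

open scoped RealInnerProductSpace

section InnerProductSpace

variable {E : Type*} [NormedAddCommGroup E] [InnerProductSpace ℝ E]

theorem abs_inner_le_infDist_mul_norm {K : Submodule ℝ E} {ν : E} (hν : ν ∈ Kᗮ) (v : E) :
    |⟪v, ν⟫| ≤ infDist v K * ‖ν‖ := by
  rcases eq_or_ne ν 0 with rfl | hν0
  · simp
  have hνpos : 0 < ‖ν‖ := norm_pos_iff.2 hν0
  rw [← div_le_iff₀ hνpos, le_infDist ⟨0, K.zero_mem⟩]
  intro h hh
  rw [div_le_iff₀ hνpos, dist_eq_norm]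
  calc |⟪v, ν⟫| = |⟪v - h, ν⟫| := by
        rw [inner_sub_left, Submodule.inner_right_of_mem_orthogonal hh hν, sub_zero]
    _ ≤ ‖v - h‖ * ‖ν‖ := abs_real_inner_le_norm _ _

theorem Submodule.exists_norm_eq_one_mem_orthogonal [FiniteDimensional ℝ E] {K : Submodule ℝ E}
    (hK : Module.finrank ℝ K < Module.finrank ℝ E) : ∃ ν ∈ Kᗮ, ‖ν‖ = 1 := by
  have hK_ne_top : K ≠ ⊤ := by
    rintro rfl
    simp at hK
  obtain ⟨v, hv, hv0⟩ :=
    Submodule.exists_mem_ne_zero_of_ne_bot (mt K.orthogonal_eq_bot_iff.1 hK_ne_top)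
  exact ⟨‖v‖⁻¹ • v, Kᗮ.smul_mem _ hv, norm_smul_inv_norm hv0⟩

end InnerProductSpace

theorem EuclideanSpace.norm_le_sum_abs {ι : Type*} [Fintype ι] (x : EuclideanSpace ℝ ι) :
    ‖x‖ ≤ ∑ i, |x i| :=
  calc ‖x‖ = √(∑ i, |x i| ^ 2) := by simp [EuclideanSpace.norm_eq]
    _ ≤ √((∑ i, |x i|) ^ 2) :=
        Real.sqrt_le_sqrt (Finset.sum_sq_le_sq_sum_of_nonneg fun i _ => abs_nonneg _)
    _ = ∑ i, |x i| := Real.sqrt_sq (Finset.sum_nonneg fun i _ => abs_nonneg _)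

theorem EuclideanSpace.real_inner_eq_sum {ι : Type*} [Fintype ι] (x y : EuclideanSpace ℝ ι) :
    ⟪x, y⟫ = ∑ i, x i * y i := by
  simp [PiLp.inner_apply, mul_comm]

theorem ENNReal.ofReal_div_pow_mul_sq_le {a C : ℝ} (ha : 0 ≤ a) (hC : 0 < C) {k : ℕ}
    {x y z : ℝ≥0∞} (hy : x ≤ ENNReal.ofReal C ^ k * y) (hz : x ≤ ENNReal.ofReal C ^ k * z) :
    ENNReal.ofReal (a / (C ^ k) ^ 2) * x ^ 2 ≤ ENNReal.ofReal a * y * z := by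
  have hcancel : ENNReal.ofReal (a / (C ^ k) ^ 2) * ENNReal.ofReal (C ^ k) *
      ENNReal.ofReal (C ^ k) = ENNReal.ofReal a := by
    rw [← ENNReal.ofReal_mul (by positivity), ← ENNReal.ofReal_mul (by positivity)]
    congr 1
    field_simp
  calc ENNReal.ofReal (a / (C ^ k) ^ 2) * x ^ 2
      ≤ ENNReal.ofReal (a / (C ^ k) ^ 2) *
          ((ENNReal.ofReal C ^ k * y) * (ENNReal.ofReal C ^ k * z)) := by
        rw [sq x]; gcongr
    _ = ENNReal.ofReal a * y * z := by
        rw [← ENNReal.ofReal_pow hC.le, ← hcancel]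
        ring

theorem measure_mul_measure_le_setLIntegral_setLIntegral {α : Type*} [MeasurableSpace α]
    {μ : Measure α} {f : α → α → ℝ≥0∞} {A B S T : Set α} {c : ℝ≥0∞}
    (hA : MeasurableSet A) (hB : MeasurableSet B) (hAS : A ⊆ S) (hBT : B ⊆ T)
    (hf : ∀ x ∈ A, ∀ y ∈ B, c ≤ f x y) :
    c * μ A * μ B ≤ ∫⁻ x in S, ∫⁻ y in T, f x y ∂μ ∂μ :=
  calc c * μ A * μ B = ∫⁻ _ in A, c * μ B ∂μ := by rw [setLIntegral_const]; ring
    _ ≤ ∫⁻ x in A, ∫⁻ y in B, f x y ∂μ ∂μ := setLIntegral_mono' hA fun x hx => by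
        rw [← setLIntegral_const]
        exact setLIntegral_mono' hB (hf x hx)
    _ ≤ ∫⁻ x in S, ∫⁻ y in T, f x y ∂μ ∂μ :=
        (lintegral_mono fun _ => lintegral_mono_set hBT).trans (lintegral_mono_set hAS)

namespace Cube

theorem isClosed_toSet (Q : Cube n) : IsClosed Q.toSet := by
  simp only [toSet, Set.ofPred_forall]
  exact isClosed_iInter fun i => isClosed_le (by fun_prop) continuous_const

theorem abs_sub_le_side {Q : Cube n} {x y : Euc n} (hx : x ∈ Q.toSet) (hy : y ∈ Q.toSet)
    (i : Fin n) : |x i - y i| ≤ Q.side := by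
  have := abs_sub_le (x i) (Q.center i) (y i)
  rw [abs_sub_comm (Q.center i)] at this
  linarith [hx i, hy i]

theorem dist_le_of_mem {Q : Cube n} {x y : Euc n} (hx : x ∈ Q.toSet) (hy : y ∈ Q.toSet) :
    dist x y ≤ n * Q.side :=
  calc dist x y ≤ ∑ i, |(x - y) i| := by
        rw [dist_eq_norm]; exact EuclideanSpace.norm_le_sum_abs _
    _ ≤ ∑ _i : Fin n, Q.side := Finset.sum_le_sum fun i _ => abs_sub_le_side hx hy i
    _ = n * Q.side := by simp

theorem scaled_one (Q : Cube n) : Q.scaled 1 = Q.toSet := by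
  simp [scaled, toSet]

def dilate (Q : Cube n) (a : ℝ) (ha : 0 < a) : Cube n :=
  ⟨Q.center, a * Q.side, mul_pos ha Q.side_pos⟩

theorem toSet_dilate (Q : Cube n) {a : ℝ} (ha : 0 < a) :
    (Q.dilate a ha).toSet = Q.scaled a := by
  simp [dilate, toSet, scaled, mul_div_assoc]

theorem scaled_dilate (Q : Cube n) {a : ℝ} (ha : 0 < a) (b : ℝ) :
    (Q.dilate a ha).scaled b = Q.scaled (b * a) := by
  simp [dilate, scaled, mul_assoc]

theorem toSet_subset_scaled_of_center_mem {Q Q' : Cube n} {a : ℝ} (hc : Q'.center ∈ Q.toSet)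
    (ha : 2 * Q.side ≤ a * Q'.side) : Q.toSet ⊆ Q'.scaled a := fun x hx i => by
  linarith [abs_sub_le_side hx hc i]

/-- The subcube of side `s` of `Q` shifted towards `e`; for a sign vector `e ∈ {±1}ⁿ` it is the
subcube sitting in the corner of `Q` that `e` points to. -/
def corner (Q : Cube n) (e : Fin n → ℝ) (s : ℝ) (hs : 0 < s) : Cube n where
  center := WithLp.toLp 2 fun i => Q.center i + e i * ((Q.side - s) / 2)
  side := s
  side_pos := hs

variable {Q : Cube n} {e : Fin n → ℝ} {s : ℝ} {hs : 0 < s}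

theorem corner_center_sub (i : Fin n) :
    (Q.corner e s hs).center i - Q.center i = e i * ((Q.side - s) / 2) := by
  simp [corner]

theorem abs_corner_center_sub_le (he : ∀ i, |e i| ≤ 1) (hsQ : s ≤ Q.side) (i : Fin n) :
    |(Q.corner e s hs).center i - Q.center i| ≤ (Q.side - s) / 2 := by
  rw [corner_center_sub, abs_mul, abs_of_nonneg (by linarith : 0 ≤ (Q.side - s) / 2)]
  exact mul_le_of_le_one_left (by linarith) (he i)

theorem corner_center_mem (he : ∀ i, |e i| ≤ 1) (hsQ : s ≤ Q.side) :
    (Q.corner e s hs).center ∈ Q.toSet := fun i => by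
  linarith [abs_corner_center_sub_le (hs := hs) he hsQ i]

theorem corner_subset (he : ∀ i, |e i| ≤ 1) (hsQ : s ≤ Q.side) :
    (Q.corner e s hs).toSet ⊆ Q.toSet := fun x hx i => by
  have hxi : |x i - (Q.corner e s hs).center i| ≤ s / 2 := hx i
  have := abs_sub_le (x i) ((Q.corner e s hs).center i) (Q.center i)
  linarith [abs_corner_center_sub_le (hs := hs) he hsQ i]

theorem le_inner_sub_of_mem_corner {ν : Euc n} (he : ∀ i, ν i * e i = |ν i|) {x x' : Euc n}
    (hx : x ∈ (Q.corner (-e) s hs).toSet) (hx' : x' ∈ (Q.corner e s hs).toSet) :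
    (Q.side - 2 * s) * ∑ i, |ν i| ≤ ⟪x' - x, ν⟫ := by
  rw [EuclideanSpace.real_inner_eq_sum, Finset.mul_sum]
  refine Finset.sum_le_sum fun i _ => ?_
  set d := (x' i - (Q.corner e s hs).center i) - (x i - (Q.corner (-e) s hs).center i)
  have hd : |d| ≤ s := by
    have hxi : |x i - (Q.corner (-e) s hs).center i| ≤ s / 2 := hx i
    have hx'i : |x' i - (Q.corner e s hs).center i| ≤ s / 2 := hx' i
    have := abs_sub (x' i - (Q.corner e s hs).center i) (x i - (Q.corner (-e) s hs).center i)
    linarith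
  have hsplit : (x' - x) i * ν i = |ν i| * (Q.side - s) + ν i * d := by
    have h₁ := corner_center_sub (Q := Q) (e := e) (hs := hs) i
    have h₂ := corner_center_sub (Q := Q) (e := -e) (hs := hs) i
    simp only [Pi.neg_apply] at h₂
    simp only [PiLp.sub_apply, d, ← he i]
    linear_combination ν i * h₁ - ν i * h₂
  have hνd : -(|ν i| * s) ≤ ν i * d := by
    have := neg_abs_le (ν i * d)
    rw [abs_mul] at this
    nlinarith [abs_nonneg (ν i)]
  rw [hsplit]
  linarith

end Cube

def IsDoubling (w : Measure (Euc n)) (C : ℝ) : Prop :=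
  ∀ Q : Cube n, w (Q.scaled 2) ≤ ENNReal.ofReal C * w Q.toSet

namespace IsDoubling

variable {w : Measure (Euc n)} {C : ℝ}

theorem mono (h : IsDoubling w C) {C' : ℝ} (hC : C ≤ C') : IsDoubling w C' := fun Q =>
  (h Q).trans (by gcongr)

theorem measure_scaled_two_pow_le (h : IsDoubling w C) (Q : Cube n) (m : ℕ) :
    w (Q.scaled (2 ^ m)) ≤ ENNReal.ofReal C ^ m * w Q.toSet := by
  induction m with
  | zero => simp [Cube.scaled_one]
  | succ m ih =>
    calc w (Q.scaled (2 ^ (m + 1))) = w ((Q.dilate (2 ^ m) (by positivity)).scaled 2) := by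
          rw [Cube.scaled_dilate, pow_succ']
      _ ≤ ENNReal.ofReal C * w (Q.scaled (2 ^ m)) := by
          rw [← Cube.toSet_dilate Q (by positivity : (0 : ℝ) < 2 ^ m)]; exact h _
      _ ≤ ENNReal.ofReal C ^ (m + 1) * w Q.toSet := by
          rw [pow_succ', mul_assoc]; gcongr

theorem measure_le_of_center_mem (h : IsDoubling w C) {Q Q' : Cube n} {j : ℕ}
    (hc : Q'.center ∈ Q.toSet) (hs : Q.side = 2 ^ j * Q'.side) :
    w Q.toSet ≤ ENNReal.ofReal C ^ (j + 1) * w Q'.toSet :=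
  calc w Q.toSet ≤ w (Q'.scaled (2 ^ (j + 1))) :=
        measure_mono (Cube.toSet_subset_scaled_of_center_mem hc (le_of_eq (by rw [hs]; ring)))
    _ ≤ ENNReal.ofReal C ^ (j + 1) * w Q'.toSet := h.measure_scaled_two_pow_le Q' (j + 1)

end IsDoubling

theorem one_div_two_mul_le_infDist_div_dist {Q : Cube n} {H : Submodule ℝ (Euc n)} {ν : Euc n}
    (hνH : ν ∈ Hᗮ) (hν : ‖ν‖ = 1) {x x' : Euc n} (hx : x ∈ Q.toSet) (hx' : x' ∈ Q.toSet)
    (hgap : Q.side / 2 ≤ ⟪x' - x, ν⟫) :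
    1 / (2 * n) ≤ infDist (x' - x) H / dist x x' := by
  have hinf : Q.side / 2 ≤ infDist (x' - x) H := by
    simpa [hν] using hgap.trans ((le_abs_self _).trans (abs_inner_le_infDist_mul_norm hνH _))
  have hinf_le_dist : infDist (x' - x) H ≤ dist x x' := by
    have := infDist_le_dist_of_mem (x := x' - x) H.zero_mem
    rwa [dist_zero_right, ← dist_eq_norm, dist_comm] at this
  have hside := Q.side_pos
  have hdist_pos : 0 < dist x x' := by linarith
  have hdist_le := Q.dist_le_of_mem hx hx'
  have hn : (0 : ℝ) < n := by
    by_contra! h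
    nlinarith
  calc 1 / (2 * n) = (Q.side / 2) / (n * Q.side) := by field_simp
    _ ≤ infDist (x' - x) H / dist x x' := div_le_div₀ (by linarith) hinf hdist_pos hdist_le

theorem IsDoubling.ufd {w : Measure (Euc n)} {C : ℝ} (hw : IsDoubling w C) (hC : 0 < C)
    (hn : 1 ≤ n) : UFD w (1 / (2 * n) / (C ^ 3) ^ 2) := by
  intro Q H hH
  obtain ⟨ν, hνH, hν⟩ := H.exists_norm_eq_one_mem_orthogonal (by
    rw [hH, finrank_euclideanSpace_fin]; omega)
  set e : Fin n → ℝ := fun i => (SignType.sign (ν i) : ℝ)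
  have he : ∀ i, |e i| ≤ 1 := fun i => by
    rcases lt_trichotomy (ν i) 0 with h | h | h <;> simp [e, h]
  have he' : ∀ i, |(-e) i| ≤ 1 := fun i => by simpa using he i
  have hs : 0 < Q.side / 4 := by linarith [Q.side_pos]
  have hsQ : Q.side / 4 ≤ Q.side := by linarith
  set Q₁ := Q.corner (-e) (Q.side / 4) hs
  set Q₂ := Q.corner e (Q.side / 4) hs
  have hQ₁ : w Q.toSet ≤ ENNReal.ofReal C ^ 3 * w Q₁.toSet :=
    hw.measure_le_of_center_mem (j := 2) (Cube.corner_center_mem he' hsQ)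
      (by simp [Q₁, Cube.corner]; ring)
  have hQ₂ : w Q.toSet ≤ ENNReal.ofReal C ^ 3 * w Q₂.toSet :=
    hw.measure_le_of_center_mem (j := 2) (Cube.corner_center_mem he hsQ)
      (by simp [Q₂, Cube.corner]; ring)
  have hratio : ∀ x ∈ Q₁.toSet, ∀ x' ∈ Q₂.toSet, ENNReal.ofReal (1 / (2 * n)) ≤
      ENNReal.ofReal (infDist (x' - x) H / dist x x') := fun x hx x' hx' => by
    refine ENNReal.ofReal_le_ofReal (one_div_two_mul_le_infDist_div_dist hνH hν
      (Cube.corner_subset he' hsQ hx) (Cube.corner_subset he hsQ hx') ?_)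
    have hsum : 1 ≤ ∑ i, |ν i| := hν ▸ EuclideanSpace.norm_le_sum_abs ν
    have hgap := Cube.le_inner_sub_of_mem_corner (fun i => self_mul_sign (ν i)) hx hx'
    nlinarith [Q.side_pos]
  calc ENNReal.ofReal (1 / (2 * n) / (C ^ 3) ^ 2) * w Q.toSet ^ 2
      ≤ ENNReal.ofReal (1 / (2 * n)) * w Q₁.toSet * w Q₂.toSet :=
        ENNReal.ofReal_div_pow_mul_sq_le (by positivity) hC hQ₁ hQ₂
    _ ≤ _ := measure_mul_measure_le_setLIntegral_setLIntegral Q₁.isClosed_toSet.measurableSet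
        Q₂.isClosed_toSet.measurableSet (Cube.corner_subset he' hsQ) (Cube.corner_subset he hsQ)
        hratio

/-- A doubling weight on `ℝ^n` is uniformly of full dimension, with a
constant `η ∈ (0,1)` depending only on `n` and the doubling constant. -/
theorem statement4 (n : ℕ) (hn : 1 ≤ n) (Cd : ℝ) :
    ∃ η : ℝ, η ∈ Set.Ioo (0 : ℝ) 1 ∧
      ∀ w : Measure (Euc n), IsLocallyFiniteMeasure w →
        (∀ Q : Cube n, w (Q.scaled 2) ≤ ENNReal.ofReal Cd * w Q.toSet) →
        UFD w η := by
  have hC : 1 ≤ max Cd 1 := le_max_right _ _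
  have hn' : (1 : ℝ) ≤ n := by exact_mod_cast hn
  refine ⟨1 / (2 * n) / (max Cd 1 ^ 3) ^ 2, ⟨by positivity, ?_⟩, fun w _ hw => ?_⟩
  · rw [div_div, div_lt_one (by positivity)]
    nlinarith [one_le_pow₀ (n := 3) hC]
  exact IsDoubling.ufd (IsDoubling.mono hw (le_max_left _ _)) (by linarith) hn
end
end

section
/- Let n ≥ 2 be an integer and let d be real with max{0, n−2} < d ≤ n. Identify ℝ^n = ℝ^{n−1} × ℝ and let S = Q₀ × {c}, where Q₀ ⊂ ℝ^{n−1} is an axis-parallel closed cube of side length ℓ_S > 0 and c ∈ ℝ. Then for every ε > 0 there exists a nonzero finite Borel measure σ on ℝ^n such that: (i) dist(S, supp σ) ≥ ε^{−1}·ℓ_S; and (ii) ε^{−1}·sup_{x ∈ S} |∫_{ℝ^n} (x−y)/|x−y|^{d+1} σ(dy)| ≤ ∫_{ℝ^n} ℓ_S/(ℓ_S^{d+1} + dist(y,S)^{d+1}) σ(dy), where the inner integral in (ii) is an absolutely convergent ℝ^n-valued integral (the supports being separated by (i)) and |·| is the Euclidean norm. -/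
/-
Put weight `w j` at the two points `z ± R eⱼ`, where `z` is the centre of `S`, with `w j = 1` for
the horizontal directions and `w n = d + 2 - n`, so that `∑ w = d + 1`. For `x = z + u ∈ S`,
expanding `K v = |v|^(-d-1) v` to first order around `± R eⱼ` gives the pair contribution
`2 R^(-d-1) (u - (d + 1) uⱼ eⱼ)`; these cancel after weighting because `uₙ = 0` on `S`, so the
Riesz transform is `O(ℓ² R^(-d-2))`. The Poisson integral is at least `(d + 1) ℓ R^(-d-1)`, and
both (i) and (ii) follow once `R` is a large multiple of `ℓ`.
-/

open MeasureTheory Metric Set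
open scoped ENNReal NNReal

noncomputable section

variable {n : ℕ}

/-- The topological support of a measure: points all of whose open neighborhoods have
positive measure. -/
def msupport (μ : Measure (Euc n)) : Set (Euc n) :=
  {x | ∀ U : Set (Euc n), IsOpen U → x ∈ U → 0 < μ U}

open scoped InnerProductSpace

theorem abs_rpow_neg_sub_rpow_neg_le {q m a b : ℝ} (hq : 0 ≤ q) (hm : 0 < m)
    (ha : m ≤ a) (hb : m ≤ b) :
    |a ^ (-q) - b ^ (-q)| ≤ q * m ^ (-q - 1) * |a - b| := by
  have hderiv : ∀ x ∈ Ici m, HasDerivWithinAt (fun t : ℝ => t ^ (-q)) (-q * x ^ (-q - 1))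
      (Ici m) x := fun x hx =>
    (Real.hasDerivAt_rpow_const (Or.inl (hm.trans_le hx).ne')).hasDerivWithinAt
  have hbound : ∀ x ∈ Ici m, ‖-q * x ^ (-q - 1)‖ ≤ q * m ^ (-q - 1) := fun x hx => by
    rw [norm_mul, norm_neg, Real.norm_of_nonneg hq,
      Real.norm_of_nonneg (Real.rpow_nonneg (hm.le.trans hx) _)]
    exact mul_le_mul_of_nonneg_left (Real.rpow_le_rpow_of_nonpos hm hx (by linarith)) hq
  simpa only [Real.norm_eq_abs] using
    (convex_Ici m).norm_image_sub_le_of_norm_hasDerivWithin_le hderiv hbound hb ha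

theorem abs_rpow_neg_add_sub_rpow_neg_sub_add_le {q m W A b δ : ℝ} (hq : 0 ≤ q) (hm : 0 < m)
    (hW : m ≤ W) (hA : m ≤ A - |b|) (hδ : |A - W| + |b| ≤ δ) :
    |(A + b) ^ (-q) - (A - b) ^ (-q) + 2 * q * b * W ^ (-q - 1)| ≤
      2 * q * (q + 1) * m ^ (-q - 2) * δ * |b| := by
  set g : ℝ → ℝ := fun t => (A + t) ^ (-q) - (A - t) ^ (-q) + 2 * q * W ^ (-q - 1) * t
  set g' : ℝ → ℝ := fun t =>
    q * ((W ^ (-q - 1) - (A + t) ^ (-q - 1)) + (W ^ (-q - 1) - (A - t) ^ (-q - 1)))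
  have hlo : ∀ t ∈ Icc (-|b|) |b|, m ≤ A + t ∧ m ≤ A - t := fun t ht => by
    constructor <;> linarith [ht.1, ht.2]
  have hderiv : ∀ t ∈ Icc (-|b|) |b|, HasDerivWithinAt g (g' t) (Icc (-|b|) |b|) t := by
    intro t ht
    have h₁ := ((hasDerivAt_id t).const_add A).rpow_const (p := -q)
      (Or.inl (hm.trans_le (hlo t ht).1).ne')
    have h₂ := ((hasDerivAt_id t).const_sub A).rpow_const (p := -q)
      (Or.inl (hm.trans_le (hlo t ht).2).ne')
    refine (((h₁.sub h₂).add ((hasDerivAt_id t).const_mul (2 * q * W ^ (-q - 1)))).congr_deriv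
      ?_).hasDerivWithinAt
    simp only [g', id]
    ring
  have hbound : ∀ t ∈ Icc (-|b|) |b|, ‖g' t‖ ≤ 2 * q * (q + 1) * m ^ (-q - 2) * δ := by
    intro t ht
    have hq1 : 0 ≤ q + 1 := by linarith
    have hmδ : ∀ a, m ≤ a → |W - a| ≤ δ →
        |W ^ (-q - 1) - a ^ (-q - 1)| ≤ (q + 1) * m ^ (-q - 2) * δ := fun a ha hWa => by
      have h := abs_rpow_neg_sub_rpow_neg_le hq1 hm hW ha
      rw [show -(q + 1) = -q - 1 by ring, show -q - 1 - 1 = -q - 2 by ring] at h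
      exact h.trans (mul_le_mul_of_nonneg_left hWa (by positivity))
    have ht' : |t| ≤ |b| := abs_le.mpr ht
    have hWA : |W - A| + |t| ≤ δ := by rw [abs_sub_comm]; linarith
    have h₁ := hmδ (A + t) (hlo t ht).1 <| by
      rw [← sub_sub]; exact (abs_sub _ _).trans hWA
    have h₂ := hmδ (A - t) (hlo t ht).2 <| by
      rw [sub_sub_eq_add_sub, add_sub_right_comm]; exact (abs_add_le _ _).trans hWA
    calc ‖g' t‖
        ≤ q * (|W ^ (-q - 1) - (A + t) ^ (-q - 1)| + |W ^ (-q - 1) - (A - t) ^ (-q - 1)|) := by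
          rw [Real.norm_eq_abs, abs_mul, abs_of_nonneg hq]
          exact mul_le_mul_of_nonneg_left (abs_add_le _ _) hq
      _ ≤ 2 * q * (q + 1) * m ^ (-q - 2) * δ := by nlinarith
  have hmvt := (convex_Icc (-|b|) |b|).norm_image_sub_le_of_norm_hasDerivWithin_le hderiv hbound
    ⟨neg_nonpos.2 (abs_nonneg b), abs_nonneg b⟩ ⟨neg_abs_le b, le_abs_self b⟩
  simp only [g, Real.norm_eq_abs, add_zero, sub_zero, mul_zero, sub_self] at hmvt
  convert hmvt using 2
  ring

theorem abs_rpow_neg_sub_add_rpow_neg_add_sub_le {q m W A b δ : ℝ} (hq : 0 ≤ q) (hm : 0 < m)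
    (hW : m ≤ W) (hA : m ≤ A - |b|) (hδ : |A - W| + |b| ≤ δ) :
    |(A - b) ^ (-q) + (A + b) ^ (-q) - 2 * W ^ (-q)| ≤ 2 * q * m ^ (-q - 1) * δ := by
  have h₁ := abs_rpow_neg_sub_rpow_neg_le (a := A - b) hq hm (by linarith [le_abs_self b]) hW
  have h₂ := abs_rpow_neg_sub_rpow_neg_le (a := A + b) hq hm (by linarith [neg_abs_le b]) hW
  have hb₁ : |A - b - W| ≤ δ := by rw [sub_right_comm]; exact (abs_sub _ _).trans hδ
  have hb₂ : |A + b - W| ≤ δ := by rw [add_sub_right_comm]; exact (abs_add_le _ _).trans hδ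
  have hc : 0 ≤ q * m ^ (-q - 1) := by positivity
  calc _ = |((A - b) ^ (-q) - W ^ (-q)) + ((A + b) ^ (-q) - W ^ (-q))| := by ring_nf
    _ ≤ _ := (abs_add_le _ _).trans ?_
  nlinarith [mul_le_mul_of_nonneg_left hb₁ hc, mul_le_mul_of_nonneg_left hb₂ hc]

theorem div_two_rpow_neg_sub {W : ℝ} (hW : 0 < W) (q k : ℝ) :
    (W / 2) ^ (-q - k) = 2 ^ (q + k) * W ^ (-q) / W ^ k := by
  rw [Real.div_rpow hW.le zero_le_two, Real.rpow_sub hW, show -q - k = -(q + k) by ring,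
    Real.rpow_neg zero_le_two]
  field_simp

section RieszKernel

variable {E : Type*} [NormedAddCommGroup E] [InnerProductSpace ℝ E]

def rieszKernel (s : ℝ) (v : E) : E := ‖v‖ ^ (-s) • v

theorem rieszKernel_add_smul (s : ℝ) (u : E) {e : E} (he : ‖e‖ = 1) (t : ℝ) :
    rieszKernel s (u + t • e) =
      (‖u‖ ^ 2 + t ^ 2 + 2 * t * ⟪u, e⟫_ℝ) ^ (-(s / 2)) • (u + t • e) := by
  have hsq : ‖u + t • e‖ ^ 2 = ‖u‖ ^ 2 + t ^ 2 + 2 * t * ⟪u, e⟫_ℝ := by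
    rw [norm_add_sq_real, norm_smul, real_inner_smul_right, he, Real.norm_eq_abs, mul_one, sq_abs]
    ring
  rw [rieszKernel, ← hsq, ← Real.rpow_natCast, ← Real.rpow_mul (norm_nonneg _)]
  ring_nf

theorem exists_norm_rieszKernel_add_rieszKernel_sub_le {s : ℝ} (hs : 0 ≤ s) :
    ∃ C, 0 ≤ C ∧ ∀ (e u : E) (R : ℝ), ‖e‖ = 1 → 0 < R → 4 * ‖u‖ ≤ R →
      ‖rieszKernel s (u - R • e) + rieszKernel s (u + R • e)
          - (2 * R ^ (-s)) • (u - (s * ⟪u, e⟫_ℝ) • e)‖ ≤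
        C * ‖u‖ ^ 2 * R ^ (-s) / R := by
  set q := s / 2
  have hq : 0 ≤ q := by positivity
  refine ⟨6 * q * 2 ^ (q + 1) + 12 * q * (q + 1) * 2 ^ (q + 2), by positivity, ?_⟩
  intro e u R he hR hu
  set a := ⟪u, e⟫_ℝ
  set A := ‖u‖ ^ 2 + R ^ 2
  set b := 2 * R * a
  have hKm : rieszKernel s (u - R • e) = (A - b) ^ (-q) • (u - R • e) := by
    rw [sub_eq_add_neg, ← neg_smul, rieszKernel_add_smul s u he]
    congr 2
    ring
  have hKp : rieszKernel s (u + R • e) = (A + b) ^ (-q) • (u + R • e) := by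
    rw [rieszKernel_add_smul s u he]
  have hRs : R ^ (-s) = (R ^ 2) ^ (-q) := by
    rw [← Real.rpow_natCast, ← Real.rpow_mul hR.le]
    simp only [q]
    ring_nf
  have ha : |a| ≤ ‖u‖ := by simpa [he] using abs_real_inner_le_norm u e
  have hb : |b| ≤ 2 * R * ‖u‖ := by
    rw [abs_mul, abs_of_pos (by positivity : 0 < 2 * R)]
    exact mul_le_mul_of_nonneg_left ha (by positivity)
  have hδ : |A - R ^ 2| + |b| ≤ 3 * R * ‖u‖ := by
    rw [add_sub_cancel_right, abs_of_nonneg (by positivity)]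
    nlinarith [norm_nonneg u]
  have hm : R ^ 2 / 2 ≤ A - |b| := by nlinarith [norm_nonneg u]
  have hm₀ : 0 < R ^ 2 / 2 := by positivity
  have hmR := half_le_self (sq_nonneg R)
  have hX := abs_rpow_neg_sub_add_rpow_neg_add_sub_le hq hm₀ hmR hm hδ
  have hY := (abs_rpow_neg_add_sub_rpow_neg_sub_add_le hq hm₀ hmR hm hδ).trans
    (mul_le_mul_of_nonneg_left hb (by positivity))
  have hkey : R * (2 * q * b * (R ^ 2) ^ (-q - 1)) = 2 * (R ^ 2) ^ (-q) * (s * a) := by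
    rw [Real.rpow_sub_one (by positivity)]
    field_simp
    ring
  have hdecomp : rieszKernel s (u - R • e) + rieszKernel s (u + R • e)
        - (2 * R ^ (-s)) • (u - (s * a) • e) =
      ((A - b) ^ (-q) + (A + b) ^ (-q) - 2 * (R ^ 2) ^ (-q)) • u +
        (R * ((A + b) ^ (-q) - (A - b) ^ (-q) + 2 * q * b * (R ^ 2) ^ (-q - 1))) • e := by
    rw [hKm, hKp, hRs]
    linear_combination (norm := module) (-1 : ℝ) • hkey • e
  rw [hdecomp]
  calc _ ≤ |(A - b) ^ (-q) + (A + b) ^ (-q) - 2 * (R ^ 2) ^ (-q)| * ‖u‖ +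
        R * |(A + b) ^ (-q) - (A - b) ^ (-q) + 2 * q * b * (R ^ 2) ^ (-q - 1)| := by
        refine (norm_add_le _ _).trans_eq ?_
        rw [norm_smul, norm_smul, he, Real.norm_eq_abs, Real.norm_eq_abs, abs_mul,
          abs_of_pos hR, mul_one]
    _ ≤ 2 * q * (R ^ 2 / 2) ^ (-q - 1) * (3 * R * ‖u‖) * ‖u‖ +
        R * (2 * q * (q + 1) * (R ^ 2 / 2) ^ (-q - 2) * (3 * R * ‖u‖) * (2 * R * ‖u‖)) := by
        gcongr
    _ = _ := by
        rw [div_two_rpow_neg_sub (by positivity), div_two_rpow_neg_sub (by positivity),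
          Real.rpow_one, Real.rpow_two, hRs]
        field_simp
        ring

end RieszKernel

theorem div_two_mul_rpow_le_div_rpow_add_infDist_rpow {X : Type*} [PseudoMetricSpace X]
    {S : Set X} {y z : X} (hz : z ∈ S) {ℓ r s : ℝ} (hℓ : 0 < ℓ) (hs : 0 ≤ s)
    (hℓr : ℓ ≤ r) (hyz : dist y z ≤ r) :
    ℓ / (2 * r ^ s) ≤ ℓ / (ℓ ^ s + infDist y S ^ s) := by
  have h₁ : ℓ ^ s ≤ r ^ s := Real.rpow_le_rpow hℓ.le hℓr hs
  have h₂ : infDist y S ^ s ≤ r ^ s :=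
    Real.rpow_le_rpow infDist_nonneg ((infDist_le_dist_of_mem hz).trans hyz) hs
  have h₃ : 0 < ℓ ^ s + infDist y S ^ s :=
    add_pos_of_pos_of_nonneg (Real.rpow_pos_of_pos hℓ s) (Real.rpow_nonneg infDist_nonneg s)
  exact div_le_div_of_nonneg_left hℓ.le h₃ (by linarith)

section EuclideanSpace

variable {ι : Type*} [Fintype ι] [DecidableEq ι]

theorem sum_smul_single_eq_self (u : EuclideanSpace ℝ ι) :
    ∑ j, u j • EuclideanSpace.single j (1 : ℝ) = u := by
  simpa [EuclideanSpace.basisFun_apply] using (EuclideanSpace.basisFun ι ℝ).sum_repr u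

theorem norm_le_card_mul_of_forall_abs_le {u : EuclideanSpace ℝ ι} {r : ℝ}
    (h : ∀ j, |u j| ≤ r) : ‖u‖ ≤ Fintype.card ι * r := by
  conv_lhs => rw [← sum_smul_single_eq_self u]
  refine (norm_sum_le _ _).trans ?_
  simpa [norm_smul] using Finset.sum_le_card_nsmul Finset.univ (fun j => |u j|) r fun j _ => h j

theorem sum_smul_sub_inner_single_smul_single_eq_zero (u : EuclideanSpace ℝ ι) {w : ι → ℝ}
    {s : ℝ} (hw : ∑ j, w j = s) (hwu : ∀ j, w j * u j = u j) :
    ∑ j, w j • (u - (s * ⟪u, EuclideanSpace.single j 1⟫_ℝ) • EuclideanSpace.single j 1) =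
      0 := by
  have hsum : ∑ j, w j • (s * ⟪u, EuclideanSpace.single j 1⟫_ℝ) • EuclideanSpace.single j 1 =
      s • u := by
    simp only [EuclideanSpace.inner_single_right, one_mul, conj_trivial, smul_smul]
    conv_rhs => rw [← sum_smul_single_eq_self u, Finset.smul_sum]
    refine Finset.sum_congr rfl fun j _ => ?_
    rw [smul_smul]
    congr 1
    linear_combination s * hwu j
  rw [Finset.sum_congr rfl fun j _ => smul_sub (w j) _ _, Finset.sum_sub_distrib,
    ← Finset.sum_smul, hw, hsum, sub_self]

def crossMeasure (z : EuclideanSpace ℝ ι) (R : ℝ) (w : ι → ℝ≥0) :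
    Measure (EuclideanSpace ℝ ι) :=
  ∑ j, w j • (Measure.dirac (z + R • EuclideanSpace.single j 1) +
    Measure.dirac (z - R • EuclideanSpace.single j 1))

section

variable (z : EuclideanSpace ℝ ι) (R : ℝ) (w : ι → ℝ≥0)

instance : IsFiniteMeasure (crossMeasure z R w) := by
  unfold crossMeasure; infer_instance

theorem crossMeasure_ne_zero {j : ι} (hj : w j ≠ 0) : crossMeasure z R w ≠ 0 := by
  intro h
  have := congrArg (fun μ : Measure _ => μ univ) h
  simp [crossMeasure] at this
  exact hj (this j)

theorem crossMeasure_compl_sphere : crossMeasure z R w (sphere z |R|)ᶜ = 0 := by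
  simp [crossMeasure, Measure.dirac_apply' _ isClosed_sphere.isOpen_compl.measurableSet, norm_smul]

theorem integral_crossMeasure {F : Type*} [NormedAddCommGroup F] [NormedSpace ℝ F]
    [CompleteSpace F] (f : EuclideanSpace ℝ ι → F) :
    ∫ y, f y ∂crossMeasure z R w = ∑ j, (w j : ℝ) •
      (f (z + R • EuclideanSpace.single j 1) + f (z - R • EuclideanSpace.single j 1)) := by
  have hint : ∀ a, Integrable f (Measure.dirac a) := fun a => integrable_dirac enorm_lt_top
  rw [crossMeasure, integral_finsetSum_measure fun j _ =>
    ((hint _).add_measure (hint _)).smul_measure_nnreal]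
  simp only [integral_smul_nnreal_measure, integral_add_measure (hint _) (hint _),
    integral_dirac, NNReal.smul_def]

end

theorem exists_norm_integral_rieszKernel_crossMeasure_le {s : ℝ} (hs : 0 ≤ s) :
    ∃ C, 0 ≤ C ∧ ∀ (x z : EuclideanSpace ℝ ι) (R : ℝ) (w : ι → ℝ≥0),
      ∑ j, (w j : ℝ) = s → (∀ j, (w j : ℝ) * (x - z) j = (x - z) j) →
      0 < R → 4 * ‖x - z‖ ≤ R →
      ‖∫ y, rieszKernel s (x - y) ∂crossMeasure z R w‖ ≤
        s * C * ‖x - z‖ ^ 2 * R ^ (-s) / R := by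
  obtain ⟨C, hC, hpair⟩ :=
    exists_norm_rieszKernel_add_rieszKernel_sub_le (E := EuclideanSpace ℝ ι) hs
  refine ⟨C, hC, fun x z R w hw hwu hR hu => ?_⟩
  have hmain : ∑ j, (w j : ℝ) • (2 * R ^ (-s)) •
      (x - z - (s * ⟪x - z, EuclideanSpace.single j 1⟫_ℝ) • EuclideanSpace.single j 1) =
      0 := by
    simp only [smul_comm (w _ : ℝ) (2 * R ^ (-s)), ← Finset.smul_sum]
    rw [sum_smul_sub_inner_single_smul_single_eq_zero _ hw hwu, smul_zero]
  rw [integral_crossMeasure, ← sub_zero (∑ j, _), ← hmain, ← Finset.sum_sub_distrib]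
  refine (norm_sum_le _ _).trans ?_
  calc _ ≤ ∑ j, (w j : ℝ) * (C * ‖x - z‖ ^ 2 * R ^ (-s) / R) := by
        refine Finset.sum_le_sum fun j _ => ?_
        have hsub : x - (z - R • EuclideanSpace.single j 1) =
            x - z + R • EuclideanSpace.single j 1 := by abel
        rw [← smul_sub, norm_smul, NNReal.norm_eq, sub_add_eq_sub_sub, hsub]
        exact mul_le_mul_of_nonneg_left (hpair _ _ R (by simp) hR hu) (w j).2
    _ = s * C * ‖x - z‖ ^ 2 * R ^ (-s) / R := by
        rw [← Finset.sum_mul, hw]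
        ring

theorem mul_div_rpow_le_integral_crossMeasure {S : Set (EuclideanSpace ℝ ι)}
    {z : EuclideanSpace ℝ ι} (hz : z ∈ S) {ℓ R s : ℝ} (hℓ : 0 < ℓ) (hs : 0 ≤ s)
    (hℓR : ℓ ≤ R) (w : ι → ℝ≥0) :
    (∑ j, (w j : ℝ)) * (ℓ / R ^ s) ≤
      ∫ y, ℓ / (ℓ ^ s + infDist y S ^ s) ∂crossMeasure z R w := by
  have hR : 0 ≤ R := hℓ.le.trans hℓR
  have hatom : ∀ (j : ι) (t : ℝ), |t| = R →
      ℓ / (2 * R ^ s) ≤ ℓ / (ℓ ^ s + infDist (z + t • EuclideanSpace.single j 1) S ^ s) :=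
    fun j t ht =>
      div_two_mul_rpow_le_div_rpow_add_infDist_rpow hz hℓ hs hℓR (by simp [norm_smul, ht])
  rw [integral_crossMeasure, Finset.sum_mul]
  refine Finset.sum_le_sum fun j _ => ?_
  rw [smul_eq_mul, sub_eq_add_neg, ← neg_smul]
  have h₁ := hatom j R (abs_of_nonneg hR)
  have h₂ := hatom j (-R) (by rw [abs_neg, abs_of_nonneg hR])
  have : ℓ / R ^ s = ℓ / (2 * R ^ s) + ℓ / (2 * R ^ s) := by ring
  rw [this]
  exact mul_le_mul_of_nonneg_left (add_le_add h₁ h₂) (w j).2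

end EuclideanSpace

theorem msupport_subset_of_measure_compl_eq_zero {μ : Measure (Euc n)} {T : Set (Euc n)}
    (hT : IsClosed T) (h : μ Tᶜ = 0) : msupport μ ⊆ T := fun _ hx => by
  by_contra hxT
  exact (hx _ hT.isOpen_compl hxT).ne' h

theorem exists_radius_crossMeasure_separated_and_riesz_le {S : Set (Euc n)} {z : Euc n}
    (hz : z ∈ S) {ρ : ℝ} (hSρ : ∀ x ∈ S, ‖x - z‖ ≤ ρ) {s : ℝ} (hs : 0 ≤ s)
    {w : Fin n → ℝ≥0} (hw : ∑ j, (w j : ℝ) = s)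
    (hwu : ∀ x ∈ S, ∀ j, (w j : ℝ) * (x - z) j = (x - z) j)
    {ℓ ε : ℝ} (hℓ : 0 < ℓ) (hε : 0 < ε) :
    ∃ R, (∀ x ∈ S, ∀ y ∈ msupport (crossMeasure z R w), ε⁻¹ * ℓ ≤ dist x y) ∧
      ∀ x ∈ S, ε⁻¹ * ‖∫ y, rieszKernel s (x - y) ∂crossMeasure z R w‖ ≤
        ∫ y, ℓ / (ℓ ^ s + infDist y S ^ s) ∂crossMeasure z R w := by
  obtain ⟨C, hC, hriesz⟩ := exists_norm_integral_rieszKernel_crossMeasure_le (ι := Fin n) hs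
  set R := max (max (4 * ρ) (2 * ε⁻¹ * ℓ)) (max ℓ (ε⁻¹ * C * ρ ^ 2 / ℓ))
  have hRρ : 4 * ρ ≤ R := (le_max_left _ _).trans (le_max_left _ _)
  have hRε : 2 * ε⁻¹ * ℓ ≤ R := (le_max_right _ _).trans (le_max_left _ _)
  have hRℓ : ℓ ≤ R := (le_max_left _ _).trans (le_max_right _ _)
  have hRC : ε⁻¹ * C * ρ ^ 2 / ℓ ≤ R := (le_max_right _ _).trans (le_max_right _ _)
  have hR : 0 < R := hℓ.trans_le hRℓ
  refine ⟨R, fun x hx y hy => ?_, fun x hx => ?_⟩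
  · have hyz : ‖y - z‖ = R := by
      simpa [abs_of_pos hR] using msupport_subset_of_measure_compl_eq_zero isClosed_sphere
        (crossMeasure_compl_sphere z R w) hy
    have := dist_triangle y x z
    rw [dist_comm y x, dist_eq_norm x z, dist_eq_norm y z] at this
    linarith [hSρ x hx]
  · have hxz := hSρ x hx
    have hCρ : ε⁻¹ * C * ‖x - z‖ ^ 2 ≤ ℓ * R := by
      rw [div_le_iff₀ hℓ] at hRC
      nlinarith [mul_le_mul_of_nonneg_left (pow_le_pow_left₀ (norm_nonneg _) hxz 2)
        (by positivity : 0 ≤ ε⁻¹ * C)]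
    calc ε⁻¹ * ‖∫ y, rieszKernel s (x - y) ∂crossMeasure z R w‖
        ≤ ε⁻¹ * (s * C * ‖x - z‖ ^ 2 * R ^ (-s) / R) := by
          gcongr
          exact hriesz x z R w hw (hwu x hx) hR (by linarith)
      _ = s * (R ^ s)⁻¹ * (ε⁻¹ * C * ‖x - z‖ ^ 2) / R := by
          rw [Real.rpow_neg hR.le]; ring
      _ ≤ s * (R ^ s)⁻¹ * (ℓ * R) / R := by gcongr
      _ = (∑ j, (w j : ℝ)) * (ℓ / R ^ s) := by
          rw [hw]; field_simp
      _ ≤ _ := mul_div_rpow_le_integral_crossMeasure hz hℓ hs hRℓ w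

def eucSnoc (w₀ : Fin (n - 1) → ℝ) (c : ℝ) : Euc n :=
  WithLp.toLp 2 fun j => if h : (j : ℕ) < n - 1 then w₀ ⟨j, h⟩ else c

theorem eucSnoc_castLE (w₀ : Fin (n - 1) → ℝ) (c : ℝ) (i : Fin (n - 1)) :
    eucSnoc w₀ c (Fin.castLE (Nat.sub_le n 1) i) = w₀ i := by
  simp [eucSnoc, i.isLt]

theorem eucSnoc_last (w₀ : Fin (n - 1) → ℝ) (c : ℝ) (h : n - 1 < n) :
    eucSnoc w₀ c ⟨n - 1, h⟩ = c := by
  simp [eucSnoc]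

theorem abs_sub_eucSnoc_le {w₀ : Fin (n - 1) → ℝ} {c ℓ : ℝ} {x : Euc n} (hℓ : 0 ≤ ℓ)
    (hx : ∀ i : Fin (n - 1), |x (Fin.castLE (Nat.sub_le n 1) i) - w₀ i| ≤ ℓ / 2)
    {h : n - 1 < n} (hxc : x ⟨n - 1, h⟩ = c) (j : Fin n) :
    |(x - eucSnoc w₀ c) j| ≤ ℓ / 2 := by
  by_cases hj : (j : ℕ) < n - 1
  · simpa [eucSnoc, hj] using hx ⟨j, hj⟩
  · obtain rfl : j = ⟨n - 1, h⟩ := Fin.ext (by have := j.isLt; simp only; omega)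
    simpa [hxc, eucSnoc_last] using div_nonneg hℓ zero_le_two

theorem sum_coe_update_one_toNNReal (hn : 1 ≤ n) (j : Fin n) {t : ℝ} (ht : 0 ≤ t) :
    ∑ i, (Function.update (1 : Fin n → ℝ≥0) j t.toNNReal i : ℝ) = n - 1 + t := by
  rw [← NNReal.coe_sum, Finset.sum_update_of_mem (Finset.mem_univ _)]
  simp only [Pi.one_apply, Finset.sum_const, Finset.card_univ_sdiff, Fintype.card_fin,
    Finset.card_singleton, nsmul_eq_mul, mul_one, NNReal.coe_add, NNReal.coe_natCast,
    Real.coe_toNNReal _ ht]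
  push_cast [hn]
  ring

/-- For `max{0, n-2} < d ≤ n` and a codimension-one cube
`S = Q₀ × {c} ⊂ ℝ^{n-1} × ℝ = ℝ^n`, for every `ε > 0` there is a nonzero finite measure `σ`
supported at distance at least `ε⁻¹ ℓ(S)` from `S` whose Riesz transform is uniformly small
on `S` compared to the gradient Poisson average of `σ` on `S`. -/
theorem statement7 (n : ℕ) (hn : 2 ≤ n) (d : ℝ)
    (hd1 : max 0 ((n : ℝ) - 2) < d)
    (w₀ : Fin (n - 1) → ℝ) (ℓS : ℝ) (hℓS : 0 < ℓS) (c : ℝ) (ε : ℝ) (hε : 0 < ε) :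
    ∃ σ : Measure (Euc n), IsFiniteMeasure σ ∧ σ ≠ 0 ∧
      (∀ x ∈ {x : Euc n |
          (∀ i : Fin (n - 1), |x (Fin.castLE (Nat.sub_le n 1) i) - w₀ i| ≤ ℓS / 2) ∧
          x ⟨n - 1, by omega⟩ = c},
        ∀ y ∈ msupport σ, ε⁻¹ * ℓS ≤ dist x y) ∧
      (∀ x ∈ {x : Euc n |
          (∀ i : Fin (n - 1), |x (Fin.castLE (Nat.sub_le n 1) i) - w₀ i| ≤ ℓS / 2) ∧
          x ⟨n - 1, by omega⟩ = c},
        ε⁻¹ * ‖∫ y, (‖x - y‖ ^ (-(d + 1))) • (x - y) ∂σ‖ ≤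
          ∫ y, ℓS / (ℓS ^ (d + 1) +
            infDist y {x : Euc n |
              (∀ i : Fin (n - 1), |x (Fin.castLE (Nat.sub_le n 1) i) - w₀ i| ≤ ℓS / 2) ∧
              x ⟨n - 1, by omega⟩ = c} ^ (d + 1)) ∂σ) := by
  set S := {x : Euc n |
    (∀ i : Fin (n - 1), |x (Fin.castLE (Nat.sub_le n 1) i) - w₀ i| ≤ ℓS / 2) ∧
    x ⟨n - 1, by omega⟩ = c}
  set last : Fin n := ⟨n - 1, by omega⟩
  set w : Fin n → ℝ≥0 := Function.update 1 last (d + 2 - n).toNNReal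
  have hd : (n : ℝ) - 2 < d ∧ 0 < d :=
    ⟨(le_max_right _ _).trans_lt hd1, (le_max_left _ _).trans_lt hd1⟩
  have hw : ∑ j, (w j : ℝ) = d + 1 := by
    rw [sum_coe_update_one_toNNReal (by omega) last (by linarith)]
    ring
  have hwu : ∀ x ∈ S, ∀ j, (w j : ℝ) * (x - eucSnoc w₀ c) j = (x - eucSnoc w₀ c) j := by
    rintro x ⟨-, hxc⟩ j
    rcases eq_or_ne j last with rfl | hj
    · simp [last, hxc, eucSnoc_last]
    · simp [w, hj]
  have hzS : eucSnoc w₀ c ∈ S :=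
    ⟨fun i => by rw [eucSnoc_castLE, sub_self, abs_zero]; positivity, eucSnoc_last w₀ c _⟩
  have hSρ : ∀ x ∈ S, ‖x - eucSnoc w₀ c‖ ≤ n * ℓS := fun x hx =>
    (norm_le_card_mul_of_forall_abs_le (abs_sub_eucSnoc_le hℓS.le hx.1 hx.2)).trans
      (by simp; nlinarith)
  obtain ⟨R, hsep, hriesz⟩ :=
    exists_radius_crossMeasure_separated_and_riesz_le hzS hSρ (by linarith) hw hwu hℓS hε
  exact ⟨crossMeasure _ R w, inferInstance, crossMeasure_ne_zero _ R w (j := last)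
    (by simp [w]; linarith), hsep, hriesz⟩
end
end

section
/- Let d > 0, let σ and w be weights on ℝ^n, and let R be a cube with 0 < σ(R) < ∞ and 0 < w(R) < ∞. Let u ∈ ℕ and t ∈ ℝ, and let S be a finite collection of pairwise disjoint subcubes of R, each of side length 2^{−u}·ℓ(R), such that every S ∈ S satisfies w(S)·σ(S) ≥ 2^t·2^{−2ud}·w(R)·σ(R). Then the cardinality of S is at most 2^{1+ud}·2^{−t/2}. -/
open MeasureTheory Metric Set
open scoped ENNReal NNReal

noncomputable section

variable {n : ℕ}

lemma Cube.isClosed_toSet_s11 (Q : Cube n) : IsClosed Q.toSet := by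
  have : Q.toSet =
      ⋂ i, (fun x : Euc n => x i) ⁻¹' {y : ℝ | |y - Q.center i| ≤ Q.side / 2} := by
    ext x; simp [Cube.toSet]
  rw [this]
  refine isClosed_iInter fun i => IsClosed.preimage ?_ ?_
  · exact (EuclideanSpace.proj i : Euc n →L[ℝ] ℝ).continuous
  · exact isClosed_le (by continuity) continuous_const

lemma Cube.measurableSet_toSet (Q : Cube n) : MeasurableSet Q.toSet :=
  Q.isClosed_toSet_s11.measurableSet

/-- Counting lemma: pairwise disjoint subcubes of `R` each of measure at least
`r · μ(R)` number at most `r⁻¹`. -/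
lemma card_le_inv_of_disjoint (μ : Measure (Euc n)) (R : Cube n)
    (hA0 : μ R.toSet ≠ 0) (hA1 : μ R.toSet ≠ ⊤) {r : ℝ} (hr : 0 < r)
    (T : Finset (Cube n)) (hsub : ∀ K ∈ T, K.toSet ⊆ R.toSet)
    (hdisj : (T : Set (Cube n)).Pairwise fun K K' => Disjoint K.toSet K'.toSet)
    (hlb : ∀ K ∈ T, ENNReal.ofReal r * μ R.toSet ≤ μ K.toSet) :
    (T.card : ℝ) ≤ r⁻¹ := by
  have hsum : ∑ K ∈ T, μ K.toSet ≤ μ R.toSet := by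
    rw [← measure_biUnion_finset hdisj fun K _ => K.measurableSet_toSet]
    exact measure_mono (Set.iUnion₂_subset hsub)
  have hcard : (T.card : ℝ≥0∞) * (ENNReal.ofReal r * μ R.toSet) ≤ μ R.toSet := by
    calc (T.card : ℝ≥0∞) * (ENNReal.ofReal r * μ R.toSet)
        = T.card • (ENNReal.ofReal r * μ R.toSet) := by rw [nsmul_eq_mul]
      _ ≤ ∑ K ∈ T, μ K.toSet := Finset.card_nsmul_le_sum T _ _ hlb
      _ ≤ μ R.toSet := hsum
  have h1 : (T.card : ℝ≥0∞) * ENNReal.ofReal r ≤ 1 := by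
    rw [← ENNReal.mul_le_mul_iff_left hA0 hA1, one_mul, mul_assoc]
    exact hcard
  have h2 : ENNReal.ofReal ((T.card : ℝ) * r) ≤ ENNReal.ofReal 1 := by
    rw [ENNReal.ofReal_mul (by positivity), ENNReal.ofReal_natCast, ENNReal.ofReal_one]
    exact h1
  have h3 : (T.card : ℝ) * r ≤ 1 := (ENNReal.ofReal_le_ofReal_iff one_pos.le).mp h2
  rw [inv_eq_one_div, le_div_iff₀ hr]
  exact h3

/-- A pigeonhole bound: if a finite family of pairwise disjoint subcubes of
`R` of side `2^{-u} ℓ(R)` all satisfy `w(S)·σ(S) ≥ 2^t·2^{-2ud}·w(R)·σ(R)`, then there are at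
most `2^{1+ud}·2^{-t/2}` of them. -/
theorem statement11 (n : ℕ) (hn : 1 ≤ n) (d : ℝ) (hd : 0 < d)
    (σ w : Measure (Euc n)) (hσ : IsLocallyFiniteMeasure σ) (hw : IsLocallyFiniteMeasure w)
    (R : Cube n) (hσR0 : 0 < σ R.toSet) (hσR1 : σ R.toSet < ⊤)
    (hwR0 : 0 < w R.toSet) (hwR1 : w R.toSet < ⊤)
    (u : ℕ) (t : ℝ) (S : Finset (Cube n))
    (hsub : ∀ K ∈ S, K.toSet ⊆ R.toSet)
    (hside : ∀ K ∈ S, K.side = R.side / 2 ^ u)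
    (hdisj : (S : Set (Cube n)).Pairwise fun K K' => Disjoint K.toSet K'.toSet)
    (hbig : ∀ K ∈ S,
      ENNReal.ofReal ((2 : ℝ) ^ t * (2 : ℝ) ^ (-(2 * u * d))) * (w R.toSet * σ R.toSet) ≤
        w K.toSet * σ K.toSet) :
    (S.card : ℝ) ≤ (2 : ℝ) ^ (1 + (u : ℝ) * d) * (2 : ℝ) ^ (-(t / 2)) := by
  set r : ℝ := (2 : ℝ) ^ (t / 2 - (u : ℝ) * d) with hr_def
  have hr : 0 < r := Real.rpow_pos_of_pos two_pos _
  have hrr : r * r = (2 : ℝ) ^ t * (2 : ℝ) ^ (-(2 * (u : ℝ) * d)) := by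
    rw [hr_def, ← Real.rpow_add two_pos, ← Real.rpow_add two_pos]
    ring_nf
  -- every cube in S is big for w or big for σ
  have hkey : ∀ K ∈ S,
      ENNReal.ofReal r * w R.toSet ≤ w K.toSet ∨
      ENNReal.ofReal r * σ R.toSet ≤ σ K.toSet := by
    intro K hK
    by_contra hcon
    push_neg at hcon
    obtain ⟨h1, h2⟩ := hcon
    have hlt : w K.toSet * σ K.toSet <
        (ENNReal.ofReal r * w R.toSet) * (ENNReal.ofReal r * σ R.toSet) :=
      ENNReal.mul_lt_mul h1 h2
    have heq : (ENNReal.ofReal r * w R.toSet) * (ENNReal.ofReal r * σ R.toSet) =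
        ENNReal.ofReal ((2 : ℝ) ^ t * (2 : ℝ) ^ (-(2 * u * d))) *
          (w R.toSet * σ R.toSet) := by
      rw [← hrr, ENNReal.ofReal_mul hr.le]
      ring
    rw [heq] at hlt
    exact absurd (hbig K hK) hlt.not_ge
  classical
  set S₁ := S.filter (fun K => ENNReal.ofReal r * w R.toSet ≤ w K.toSet) with hS₁
  set S₂ := S.filter (fun K => ¬ ENNReal.ofReal r * w R.toSet ≤ w K.toSet) with hS₂
  have hcard₁ : (S₁.card : ℝ) ≤ r⁻¹ := by
    refine card_le_inv_of_disjoint w R hwR0.ne' hwR1.ne hr S₁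
      (fun K hK => hsub K (Finset.mem_of_mem_filter K hK)) ?_
      (fun K hK => (Finset.mem_filter.mp hK).2)
    exact hdisj.mono (by exact_mod_cast Finset.filter_subset _ S)
  have hcard₂ : (S₂.card : ℝ) ≤ r⁻¹ := by
    refine card_le_inv_of_disjoint σ R hσR0.ne' hσR1.ne hr S₂
      (fun K hK => hsub K (Finset.mem_of_mem_filter K hK)) ?_ ?_
    · exact hdisj.mono (by exact_mod_cast Finset.filter_subset _ S)
    · intro K hK
      rcases Finset.mem_filter.mp hK with ⟨hKS, hKw⟩
      rcases hkey K hKS with h | h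
      · exact absurd h hKw
      · exact h
  have hsplit : S.card = S₁.card + S₂.card := by
    rw [hS₁, hS₂, Finset.card_filter_add_card_filter_not]
  have hinv : r⁻¹ = (2 : ℝ) ^ ((u : ℝ) * d - t / 2) := by
    rw [hr_def, ← Real.rpow_neg two_pos.le]
    ring_nf
  have hfinal : (2 : ℝ) * r⁻¹ = (2 : ℝ) ^ (1 + (u : ℝ) * d) * (2 : ℝ) ^ (-(t / 2)) := by
    have h2 : (2 : ℝ) * (2 : ℝ) ^ ((u : ℝ) * d - t / 2)
        = (2 : ℝ) ^ (1 + ((u : ℝ) * d - t / 2)) := by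
      rw [Real.rpow_add two_pos, Real.rpow_one]
    rw [hinv, h2, ← Real.rpow_add two_pos]
    congr 1
    ring
  calc (S.card : ℝ) = (S₁.card : ℝ) + (S₂.card : ℝ) := by rw [hsplit]; push_cast; ring
    _ ≤ r⁻¹ + r⁻¹ := add_le_add hcard₁ hcard₂
    _ = 2 * r⁻¹ := by ring
    _ = _ := hfinal
end
end
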